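/- arXiv:2602.07220 — 2 statements merged into one kernel-verified Lean document; each statement's English description precedes it below -/
import Mathlib

section
/- Let P_L = {(x₁,x₂,y₁,y₂) ∈ ℝ⁴ : x₁²+x₂² ≤ 1, y₁²+y₂² ≤ 1} be the Lagrangian bidisk. Then there is no toric convex body K ⊂ ℝ⁴ and unitary matrix Q ∈ U(2) such that P_L = QK. -/
open MeasureTheory Metric Matrix Pointwise

noncomputable section

/-- The rotation-invariant probability measure on the unit sphere of a Euclidean space. -/
noncomputable def sphereProb (ι : Type*) [Fintype ι] :
    Measure (sphere (0 : EuclideanSpace ℝ ι) 1) :=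
  ((volume : Measure (EuclideanSpace ℝ ι)).toSphere Set.univ)⁻¹ •
    (volume : Measure (EuclideanSpace ℝ ι)).toSphere

/-- Support function of a set: `h_X(u) = sup_{x ∈ X} ⟨x, u⟩`. -/
noncomputable def suppFn {ι : Type*} [Fintype ι] (X : Set (EuclideanSpace ℝ ι))
    (u : EuclideanSpace ℝ ι) : ℝ :=
  sSup ((fun x => (inner ℝ x u : ℝ)) '' X)

/-- Mean width: `M(X) = ∫_{S^{d-1}} (h_X(u) + h_X(-u)) dσ(u)`. -/
noncomputable def meanWidth {ι : Type*} [Fintype ι] (X : Set (EuclideanSpace ℝ ι)) : ℝ :=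
  ∫ u : sphere (0 : EuclideanSpace ℝ ι) 1,
    (suppFn X (u : EuclideanSpace ℝ ι) + suppFn X (-(u : EuclideanSpace ℝ ι))) ∂(sphereProb ι)

/-- A convex body: compact, convex, with nonempty interior. -/
def IsConvexBody {ι : Type*} [Fintype ι] (K : Set (EuclideanSpace ℝ ι)) : Prop :=
  IsCompact K ∧ Convex ℝ K ∧ (interior K).Nonempty

/-- `ℝ^{2n}` with coordinates `(x₁,…,xₙ,y₁,…,yₙ)`: the `xᵢ` are indexed by `Sum.inl i`,
the `yⱼ` by `Sum.inr j`. -/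
abbrev Esp (n : ℕ) := EuclideanSpace ℝ (Fin n ⊕ Fin n)

/-- The standard symplectic matrix `J = [[0, Iₙ],[-Iₙ, 0]]`. -/
def Jmat (n : ℕ) : Matrix (Fin n ⊕ Fin n) (Fin n ⊕ Fin n) ℝ :=
  Matrix.fromBlocks 0 1 (-1) 0

/-- Membership in `Sp(2n)`: `Pᵀ J P = J`. -/
def IsSymplecticMat {n : ℕ} (P : Matrix (Fin n ⊕ Fin n) (Fin n ⊕ Fin n) ℝ) : Prop :=
  Pᵀ * Jmat n * P = Jmat n

/-- Action of a `2n × 2n` matrix on `ℝ^{2n}`. -/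
noncomputable def matAct {n : ℕ} (P : Matrix (Fin n ⊕ Fin n) (Fin n ⊕ Fin n) ℝ) :
    Esp n → Esp n :=
  Matrix.toEuclideanLin P

/-- The standard symplectic form `ω₀ = Σᵢ dxᵢ ∧ dyᵢ` on `ℝ^{2n}`. -/
def stdSymplForm {n : ℕ} (u v : Esp n) : ℝ :=
  ∑ j : Fin n, (u (Sum.inl j) * v (Sum.inr j) - u (Sum.inr j) * v (Sum.inl j))

/-- A symplectomorphism of `ℝ^{2n}`: a smooth diffeomorphism whose differential
preserves the standard symplectic form `ω₀`. -/
def IsSymplectomorphism {n : ℕ} (f : Esp n → Esp n) : Prop :=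
  ContDiff ℝ (⊤ : ℕ∞) f ∧
  (∃ g : Esp n → Esp n, ContDiff ℝ (⊤ : ℕ∞) g ∧
      Function.LeftInverse g f ∧ Function.RightInverse g f) ∧
  ∀ x u v, stdSymplForm (fderiv ℝ f x u) (fderiv ℝ f x v) = stdSymplForm u v

/-- The torus action `(θ₁,…,θₙ)·(z₁,…,zₙ) = (e^{iθ₁}z₁,…,e^{iθₙ}zₙ)` on `ℝ^{2n} = ℂⁿ`,
`z_j = x_j + i y_j`. -/
def torusAct {n : ℕ} (θ : Fin n → ℝ) (u : Esp n) : Esp n :=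
  (WithLp.equiv 2 _).symm <| Sum.elim
    (fun j => Real.cos (θ j) * u (Sum.inl j) - Real.sin (θ j) * u (Sum.inr j))
    (fun j => Real.sin (θ j) * u (Sum.inl j) + Real.cos (θ j) * u (Sum.inr j))

/-- A toric subset of `ℝ^{2n}`: one invariant under the standard torus action. -/
def IsToric {n : ℕ} (X : Set (Esp n)) : Prop :=
  ∀ θ : Fin n → ℝ, torusAct θ '' X = X

/-- The `ℝ`-linear action of a complex `n × n` matrix on `ℝ^{2n} = ℂⁿ`, via `z_j = x_j + i y_j`. -/
def unitaryAct {n : ℕ} (Q : Matrix (Fin n) (Fin n) ℂ) (u : Esp n) : Esp n :=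
  (WithLp.equiv 2 _).symm <| Sum.elim
    (fun j => (Q.mulVec (fun m => Complex.mk (u (Sum.inl m)) (u (Sum.inr m))) j).re)
    (fun j => (Q.mulVec (fun m => Complex.mk (u (Sum.inl m)) (u (Sum.inr m))) j).im)

/-- The Lagrangian bidisk `P_L = {(x₁,x₂,y₁,y₂) : x₁²+x₂² ≤ 1, y₁²+y₂² ≤ 1} ⊂ ℝ⁴`. -/
def lagBidisk : Set (Esp 2) :=
  {u | (u (Sum.inl 0)) ^ 2 + (u (Sum.inl 1)) ^ 2 ≤ 1 ∧
       (u (Sum.inr 0)) ^ 2 + (u (Sum.inr 1)) ^ 2 ≤ 1}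

lemma unitaryAct_comp {n} (M N : Matrix (Fin n) (Fin n) ℂ) (u : Esp n) :
    unitaryAct M (unitaryAct N u) = unitaryAct (M * N) u := by
  have hz : (fun m => Complex.mk (unitaryAct N u (Sum.inl m)) (unitaryAct N u (Sum.inr m)))
      = N.mulVec (fun m => Complex.mk (u (Sum.inl m)) (u (Sum.inr m))) := by
    funext m
    simp [unitaryAct, WithLp.equiv_symm_apply]
  ext j
  cases j with
  | inl j => simp [unitaryAct, WithLp.equiv_symm_apply, hz, Matrix.mulVec_mulVec]
  | inr j => simp [unitaryAct, WithLp.equiv_symm_apply, hz, Matrix.mulVec_mulVec]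

lemma torusAct_eq {n} (θ : Fin n → ℝ) (u : Esp n) :
    torusAct θ u = unitaryAct (Matrix.diagonal (fun j => Complex.exp (θ j * Complex.I))) u := by
  ext j
  cases j <;>
    simp [torusAct, unitaryAct, WithLp.equiv_symm_apply, Matrix.mulVec_diagonal,
      Complex.exp_mul_I, Complex.mul_re, Complex.mul_im, Complex.add_re, Complex.add_im,
      Complex.cos_ofReal_re, Complex.sin_ofReal_re] <;>
    ring_nf

lemma kills (p q r s c : ℝ)
    (hc : p^2 + q^2 + r^2 + s^2 = c)
    (h : ∀ x₁ x₂ y₁ y₂ : ℝ, x₁^2 + x₂^2 ≤ 1 → y₁^2 + y₂^2 ≤ 1 →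
      (p*x₁ + q*x₂ + r*y₁ + s*y₂)^2 ≤ c) :
    (p = 0 ∧ q = 0) ∨ (r = 0 ∧ s = 0) := by
  by_cases h1 : p^2 + q^2 = 0
  · left; constructor <;> nlinarith [sq_nonneg p, sq_nonneg q]
  by_cases h2 : r^2 + s^2 = 0
  · right; constructor <;> nlinarith [sq_nonneg r, sq_nonneg s]
  exfalso
  have h1' : 0 < p^2 + q^2 := lt_of_le_of_ne (by positivity) (Ne.symm h1)
  have h2' : 0 < r^2 + s^2 := lt_of_le_of_ne (by positivity) (Ne.symm h2)
  set l1 := Real.sqrt (p^2+q^2) with hl1def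
  set l2 := Real.sqrt (r^2+s^2) with hl2def
  have l1pos : 0 < l1 := Real.sqrt_pos.mpr h1'
  have l2pos : 0 < l2 := Real.sqrt_pos.mpr h2'
  have hl1 : l1^2 = p^2+q^2 := Real.sq_sqrt (by positivity)
  have hl2 : l2^2 = r^2+s^2 := Real.sq_sqrt (by positivity)
  have hx : (p/l1)^2 + (q/l1)^2 ≤ 1 := by
    rw [div_pow, div_pow, ← add_div, div_le_one (by positivity)]
    linarith
  have hy : (r/l2)^2 + (s/l2)^2 ≤ 1 := by
    rw [div_pow, div_pow, ← add_div, div_le_one (by positivity)]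
    linarith
  have e1 : p*(p/l1) + q*(q/l1) = l1 := by
    field_simp
    linear_combination -hl1
  have e2 : r*(r/l2) + s*(s/l2) = l2 := by
    field_simp
    linear_combination -hl2
  have hv : p*(p/l1) + q*(q/l1) + r*(r/l2) + s*(s/l2) = l1 + l2 := by linarith
  have := h (p/l1) (q/l1) (r/l2) (s/l2) hx hy
  rw [hv] at this
  nlinarith [mul_pos l1pos l2pos]

def pt (x₁ x₂ y₁ y₂ : ℝ) : Esp 2 :=
  (WithLp.equiv 2 _).symm (Sum.elim ![x₁, x₂] ![y₁, y₂])

lemma master (A : Matrix (Fin 2) (Fin 2) ℂ)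
    (h : ∀ p ∈ lagBidisk, unitaryAct A p ∈ lagBidisk)
    (x₁ x₂ y₁ y₂ : ℝ) (hx : x₁^2 + x₂^2 ≤ 1) (hy : y₁^2 + y₂^2 ≤ 1) :
    ((A 0 0).re*x₁+(A 0 1).re*x₂-(A 0 0).im*y₁-(A 0 1).im*y₂)^2
      + ((A 1 0).re*x₁+(A 1 1).re*x₂-(A 1 0).im*y₁-(A 1 1).im*y₂)^2 ≤ 1 := by
  have hp : pt x₁ x₂ y₁ y₂ ∈ lagBidisk := ⟨by simpa [pt] using hx, by simpa [pt] using hy⟩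
  have h2 := (h _ hp).1
  simp only [unitaryAct, lagBidisk, pt, Set.mem_setOf_eq, WithLp.equiv_symm_apply,
    Sum.elim_inl, Sum.elim_inr, Matrix.mulVec, dotProduct, WithLp.ofLp_toLp, Fin.sum_univ_two,
    Complex.add_re, Complex.mul_re, Matrix.cons_val_zero, Matrix.cons_val_one,
    Matrix.head_cons] at h2
  nlinarith [h2]

lemma rowFacts (A : Matrix (Fin 2) (Fin 2) ℂ) (hA : A ∈ Matrix.unitaryGroup (Fin 2) ℂ) :
    (A 0 0).re^2 + (A 0 1).re^2 + (A 0 0).im^2 + (A 0 1).im^2 = 1 ∧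
    (A 1 0).re^2 + (A 1 1).re^2 + (A 1 0).im^2 + (A 1 1).im^2 = 1 ∧
    (A 0 0).re*(A 1 0).re + (A 0 1).re*(A 1 1).re
      + (A 0 0).im*(A 1 0).im + (A 0 1).im*(A 1 1).im = 0 := by
  have hAA : A * star A = 1 := Matrix.mem_unitaryGroup_iff.mp hA
  have h00 := congrFun (congrFun hAA 0) 0
  have h11 := congrFun (congrFun hAA 1) 1
  have h01 := congrFun (congrFun hAA 0) 1
  simp [Matrix.mul_apply, Fin.sum_univ_two, Matrix.one_apply, Matrix.star_eq_conjTranspose,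
    Matrix.conjTranspose_apply, Complex.ext_iff, Complex.add_re, Complex.add_im,
    Complex.mul_re, Complex.mul_im] at h00 h11 h01
  refine ⟨by nlinarith [h00.1], by nlinarith [h11.1], by nlinarith [h01.1]⟩

set_option maxHeartbeats 1600000
/-- The Lagrangian bidisk is not the image of a toric convex body under any
unitary matrix `Q ∈ U(2)`. -/
theorem stmt_6 :
    ¬ ∃ (K : Set (Esp 2)) (Q : Matrix (Fin 2) (Fin 2) ℂ),
        IsConvexBody K ∧ IsToric K ∧ Q ∈ Matrix.unitaryGroup (Fin 2) ℂ ∧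
        lagBidisk = unitaryAct Q '' K := by
  rintro ⟨K, Q, -, hT, hQ, heq⟩
  set D : Matrix (Fin 2) (Fin 2) ℂ :=
    Matrix.diagonal (fun j => Complex.exp ((![Real.pi/3, 0] j : ℝ) * Complex.I)) with hDdef
  have hQ' : star Q * Q = 1 := Matrix.mem_unitaryGroup_iff'.mp hQ
  have hDu : D ∈ Matrix.unitaryGroup (Fin 2) ℂ := by
    rw [Matrix.mem_unitaryGroup_iff]
    have hstar : star D = Matrix.diagonal
        (fun j => starRingEnd ℂ (Complex.exp ((![Real.pi/3, 0] j : ℝ) * Complex.I))) := by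
      simp [hDdef, Matrix.star_eq_conjTranspose, Matrix.diagonal_conjTranspose]
    rw [hstar, hDdef, Matrix.diagonal_mul_diagonal]
    convert Matrix.diagonal_one
    rw [Complex.mul_conj]
    norm_cast
    simp [Complex.normSq_eq_norm_sq, Complex.norm_exp_ofReal_mul_I]
  set A := Q * D * star Q with hAdef
  have hAu : A ∈ Matrix.unitaryGroup (Fin 2) ℂ := mul_mem (mul_mem hQ hDu) (Unitary.star_mem hQ)
  have hinv : ∀ p ∈ lagBidisk, unitaryAct A p ∈ lagBidisk := by
    intro p hp
    rw [heq] at hp ⊢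
    obtain ⟨k, hk, rfl⟩ := hp
    have hmm : A * Q
        = Q * Matrix.diagonal (fun j => Complex.exp ((![Real.pi/3, 0] j : ℝ) * Complex.I)) := by
      rw [hAdef, mul_assoc, hQ', mul_one, hDdef]
    have hstep : unitaryAct A (unitaryAct Q k)
        = unitaryAct Q (torusAct ![Real.pi/3, 0] k) := by
      rw [torusAct_eq, unitaryAct_comp, unitaryAct_comp, hmm]
    rw [hstep]
    exact Set.mem_image_of_mem _
      (by rw [← hT ![Real.pi/3, 0]]; exact Set.mem_image_of_mem _ hk)
  have htr : A.trace = Complex.exp ((Real.pi/3 : ℝ) * Complex.I) + 1 := by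
    rw [hAdef, Matrix.trace_mul_comm, ← mul_assoc, hQ', one_mul, hDdef, Matrix.trace_diagonal,
      Fin.sum_univ_two]
    norm_num
  have htr2 : A 0 0 + A 1 1 = Complex.exp ((Real.pi/3 : ℝ) * Complex.I) + 1 := by
    rw [← htr, Matrix.trace, Fin.sum_univ_two]
    rfl
  have htrre : (A 0 0).re + (A 1 1).re = 3/2 := by
    have h := congrArg Complex.re htr2
    simp only [Complex.add_re, Complex.exp_ofReal_mul_I_re, Complex.one_re] at h
    rw [Real.cos_pi_div_three] at h
    linarith
  have htrim : (A 0 0).im + (A 1 1).im = Real.sqrt 3 / 2 := by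
    have h := congrArg Complex.im htr2
    simp only [Complex.add_im, Complex.exp_ofReal_mul_I_im, Complex.one_im] at h
    rw [Real.sin_pi_div_three] at h
    linarith
  obtain ⟨E1, E2, E3⟩ := rowFacts A hAu
  have C1 := kills ((A 0 0).re) ((A 0 1).re) (-(A 0 0).im) (-(A 0 1).im) 1
    (by linear_combination E1)
    (fun x₁ x₂ y₁ y₂ hx hy => by
      nlinarith [master A hinv x₁ x₂ y₁ y₂ hx hy,
        sq_nonneg ((A 1 0).re*x₁+(A 1 1).re*x₂-(A 1 0).im*y₁-(A 1 1).im*y₂)])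
  have C2 := kills ((A 1 0).re) ((A 1 1).re) (-(A 1 0).im) (-(A 1 1).im) 1
    (by linear_combination E2)
    (fun x₁ x₂ y₁ y₂ hx hy => by
      nlinarith [master A hinv x₁ x₂ y₁ y₂ hx hy,
        sq_nonneg ((A 0 0).re*x₁+(A 0 1).re*x₂-(A 0 0).im*y₁-(A 0 1).im*y₂)])
  have C3 := kills ((A 0 0).re + (A 1 0).re) ((A 0 1).re + (A 1 1).re)
      (-((A 0 0).im + (A 1 0).im)) (-((A 0 1).im + (A 1 1).im)) 2
    (by linear_combination E1 + E2 + 2 * E3)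
    (fun x₁ x₂ y₁ y₂ hx hy => by
      nlinarith [master A hinv x₁ x₂ y₁ y₂ hx hy,
        sq_nonneg (((A 0 0).re*x₁+(A 0 1).re*x₂-(A 0 0).im*y₁-(A 0 1).im*y₂)
          - ((A 1 0).re*x₁+(A 1 1).re*x₂-(A 1 0).im*y₁-(A 1 1).im*y₂))])
  have hs3 : 0 < Real.sqrt 3 := Real.sqrt_pos.mpr (by norm_num)
  rcases C1 with ⟨ha, hb⟩ | ⟨ha, hb⟩ <;> rcases C2 with ⟨hc, hd⟩ | ⟨hc, hd⟩
  · linarith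
  · rcases C3 with ⟨h1, h2⟩ | ⟨h1, h2⟩
    · linarith
    · linarith
  · nlinarith [E1, sq_nonneg ((A 0 1).re), sq_nonneg ((A 0 0).im), sq_nonneg ((A 0 1).im)]
  · linarith

end
end

section
/- There exists a unitary matrix Q ∈ U(n) such that Q·𝒫(ρ̄,I,J) is toric if and only if each subspace V_ℓ is a symplectic subspace of ℝ^{2n} (i.e., the restriction of the standard symplectic form ω₀ to V_ℓ is nondegenerate), which holds if and only if I_ℓ = J_ℓ for every ℓ. -/
open MeasureTheory Metric Matrix Pointwise

noncomputable section

/-- Orthogonal projection of Euclidean space onto the span of the coordinate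
vectors indexed by `A`. -/
def coordProj {ι : Type*} [Fintype ι] [DecidableEq ι] (A : Finset ι)
    (u : EuclideanSpace ℝ ι) : EuclideanSpace ℝ ι :=
  (WithLp.equiv 2 _).symm fun i => if i ∈ A then u i else 0

/-- The index set of `V_ℓ = span({e_i : i ∈ I_ℓ} ∪ {f_j : j ∈ J_ℓ})` inside `Fin n ⊕ Fin n`. -/
def sumIdx {n k : ℕ} (I J : Fin k → Finset (Fin n)) (ℓ : Fin k) : Finset (Fin n ⊕ Fin n) :=
  (I ℓ).image Sum.inl ∪ (J ℓ).image Sum.inr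

/-- The product of balls `𝒫(ρ̄, I, J) = ρ₁B^{m₁} × ⋯ × ρ_k B^{m_k}`:
all sums `v₁ + ⋯ + v_k` where `v_ℓ` lies in the closed ball of radius `ρ_ℓ` in `V_ℓ`. -/
def prodBalls {n k : ℕ} (ρ : Fin k → ℝ) (I J : Fin k → Finset (Fin n)) : Set (Esp n) :=
  {v | ∃ w : Fin k → Esp n, v = ∑ ℓ, w ℓ ∧
    ∀ ℓ, (∀ i, i ∉ sumIdx I J ℓ → w ℓ i = 0) ∧ ‖w ℓ‖ ≤ ρ ℓ}

/-- The data `(ρ̄, I, J)` is admissible: radii positive, `I` and `J` are partitions of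
`{1,…,n}` into pairwise disjoint (possibly empty) subsets, and for each `ℓ` at most one
of `I_ℓ`, `J_ℓ` is empty. -/
def AdmissibleData {n k : ℕ} (ρ : Fin k → ℝ) (I J : Fin k → Finset (Fin n)) : Prop :=
  (∀ ℓ, 0 < ρ ℓ) ∧
  (∀ ℓ ℓ', ℓ ≠ ℓ' → Disjoint (I ℓ) (I ℓ')) ∧ (∀ i, ∃ ℓ, i ∈ I ℓ) ∧
  (∀ ℓ ℓ', ℓ ≠ ℓ' → Disjoint (J ℓ) (J ℓ')) ∧ (∀ i, ∃ ℓ, i ∈ J ℓ) ∧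
  (∀ ℓ, (I ℓ).Nonempty ∨ (J ℓ).Nonempty)

/-- Condition (★): if `I_ℓ ∩ J_{ℓ'} ≠ ∅` then `|I_ℓ|+|J_ℓ| = |I_{ℓ'}|+|J_{ℓ'}|`
and `ρ_ℓ = ρ_{ℓ'}`. -/
def StarCond {n k : ℕ} (ρ : Fin k → ℝ) (I J : Fin k → Finset (Fin n)) : Prop :=
  ∀ ℓ ℓ', ((I ℓ) ∩ (J ℓ')).Nonempty →
    (I ℓ).card + (J ℓ).card = (I ℓ').card + (J ℓ').card ∧ ρ ℓ = ρ ℓ'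

/-- Membership in the coordinate subspace `V_ℓ`. -/
def memVl {n k : ℕ} (I J : Fin k → Finset (Fin n)) (ℓ : Fin k) (u : Esp n) : Prop :=
  ∀ i, i ∉ sumIdx I J ℓ → u i = 0

/-- The subspace `V_ℓ` is symplectic: the restriction of `ω₀` to it is nondegenerate. -/
def VlSymplectic {n k : ℕ} (I J : Fin k → Finset (Fin n)) (ℓ : Fin k) : Prop :=
  ∀ u, memVl I J ℓ u → (∀ v, memVl I J ℓ v → stdSymplForm u v = 0) → u = 0


set_option maxHeartbeats 1000000

section AuxLemmas

variable {n k : ℕ}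

lemma coordProj_apply {ι : Type*} [Fintype ι] [DecidableEq ι] (A : Finset ι)
    (u : EuclideanSpace ℝ ι) (i : ι) :
    coordProj A u i = if i ∈ A then u i else 0 := rfl

lemma torusAct_apply_inl (θ : Fin n → ℝ) (u : Esp n) (j : Fin n) :
    torusAct θ u (Sum.inl j)
      = Real.cos (θ j) * u (Sum.inl j) - Real.sin (θ j) * u (Sum.inr j) := rfl

lemma torusAct_apply_inr (θ : Fin n → ℝ) (u : Esp n) (j : Fin n) :
    torusAct θ u (Sum.inr j)
      = Real.sin (θ j) * u (Sum.inl j) + Real.cos (θ j) * u (Sum.inr j) := rfl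

lemma esp_inner_eq {ι : Type*} [Fintype ι] (u v : EuclideanSpace ℝ ι) :
    (inner ℝ u v : ℝ) = ∑ i, u i * v i := by
  simp [PiLp.inner_apply, RCLike.inner_apply, mul_comm]

lemma esp_ext {u v : Esp n} (h : ∀ i, u i = v i) : u = v := PiLp.ext h

end AuxLemmas

section Torus
variable {n : ℕ}

lemma torusAct_comp (θ φ : Fin n → ℝ) (u : Esp n) :
    torusAct θ (torusAct φ u) = torusAct (θ + φ) u := by
  apply esp_ext; rintro (j | j) <;>
    simp only [torusAct_apply_inl, torusAct_apply_inr, Pi.add_apply,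
      Real.cos_add, Real.sin_add] <;> ring

lemma torusAct_zero (u : Esp n) : torusAct (0 : Fin n → ℝ) u = u := by
  apply esp_ext; rintro (j | j) <;>
    simp [torusAct_apply_inl, torusAct_apply_inr]

lemma torusAct_add (θ : Fin n → ℝ) (u v : Esp n) :
    torusAct θ (u + v) = torusAct θ u + torusAct θ v := by
  apply esp_ext; rintro (j | j) <;>
    simp only [torusAct_apply_inl, torusAct_apply_inr, PiLp.add_apply] <;> ring

lemma torusAct_smul (θ : Fin n → ℝ) (r : ℝ) (u : Esp n) :
    torusAct θ (r • u) = r • torusAct θ u := by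
  apply esp_ext; rintro (j | j) <;>
    simp only [torusAct_apply_inl, torusAct_apply_inr, PiLp.smul_apply, smul_eq_mul] <;> ring

lemma torusAct_inner (θ : Fin n → ℝ) (u v : Esp n) :
    (inner ℝ (torusAct θ u) (torusAct θ v) : ℝ) = inner ℝ u v := by
  rw [esp_inner_eq, esp_inner_eq, Fintype.sum_sum_type, Fintype.sum_sum_type]
  rw [← Finset.sum_add_distrib, ← Finset.sum_add_distrib]
  apply Finset.sum_congr rfl
  intro j _
  simp only [torusAct_apply_inl, torusAct_apply_inr]
  have h := Real.sin_sq_add_cos_sq (θ j)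
  linear_combination (u (Sum.inl j) * v (Sum.inl j) + u (Sum.inr j) * v (Sum.inr j)) * h

lemma torusAct_norm (θ : Fin n → ℝ) (u : Esp n) : ‖torusAct θ u‖ = ‖u‖ := by
  have h : (inner ℝ (torusAct θ u) (torusAct θ u) : ℝ) = inner ℝ u u := torusAct_inner θ u u
  rw [real_inner_self_eq_norm_sq, real_inner_self_eq_norm_sq] at h
  have := norm_nonneg (torusAct θ u); have := norm_nonneg u
  nlinarith

noncomputable def torusLIE (θ : Fin n → ℝ) : Esp n ≃ₗᵢ[ℝ] Esp n where
  toFun := torusAct θ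
  invFun := torusAct (-θ)
  map_add' := torusAct_add θ
  map_smul' := torusAct_smul θ
  left_inv := fun u => by
    show torusAct (-θ) (torusAct θ u) = u
    rw [torusAct_comp, neg_add_cancel, torusAct_zero]
  right_inv := fun u => by
    show torusAct θ (torusAct (-θ) u) = u
    rw [torusAct_comp, add_neg_cancel, torusAct_zero]
  norm_map' := torusAct_norm θ

end Torus

section Proj
variable {n k : ℕ} {I J : Fin k → Finset (Fin n)}

lemma mem_sumIdx_inl {ℓ : Fin k} {i : Fin n} :
    Sum.inl i ∈ sumIdx I J ℓ ↔ i ∈ I ℓ := by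
  simp [sumIdx]

lemma mem_sumIdx_inr {ℓ : Fin k} {i : Fin n} :
    Sum.inr i ∈ sumIdx I J ℓ ↔ i ∈ J ℓ := by
  simp [sumIdx]

lemma sumIdx_disjoint {ρ : Fin k → ℝ} (hadm : AdmissibleData ρ I J) {ℓ m : Fin k}
    (h : ℓ ≠ m) {i : Fin n ⊕ Fin n} (hi : i ∈ sumIdx I J ℓ) : i ∉ sumIdx I J m := by
  obtain ⟨-, hI, -, hJ, -, -⟩ := hadm
  rcases i with i | i
  · rw [mem_sumIdx_inl] at hi ⊢
    exact fun hm => (Finset.disjoint_left.1 (hI ℓ m h)) hi hm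
  · rw [mem_sumIdx_inr] at hi ⊢
    exact fun hm => (Finset.disjoint_left.1 (hJ ℓ m h)) hi hm

lemma sumIdx_cover {ρ : Fin k → ℝ} (hadm : AdmissibleData ρ I J) (i : Fin n ⊕ Fin n) :
    ∃ ℓ, i ∈ sumIdx I J ℓ := by
  obtain ⟨-, -, hI, -, hJ, -⟩ := hadm
  rcases i with i | i
  · obtain ⟨ℓ, hℓ⟩ := hI i; exact ⟨ℓ, mem_sumIdx_inl.2 hℓ⟩
  · obtain ⟨ℓ, hℓ⟩ := hJ i; exact ⟨ℓ, mem_sumIdx_inr.2 hℓ⟩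

lemma sumIdx_nonempty {ρ : Fin k → ℝ} (hadm : AdmissibleData ρ I J) (ℓ : Fin k) :
    ∃ i, i ∈ sumIdx I J ℓ := by
  obtain ⟨-, -, -, -, -, hne⟩ := hadm
  rcases hne ℓ with ⟨i, hi⟩ | ⟨i, hi⟩
  · exact ⟨Sum.inl i, mem_sumIdx_inl.2 hi⟩
  · exact ⟨Sum.inr i, mem_sumIdx_inr.2 hi⟩

variable {ι : Type*} [Fintype ι] [DecidableEq ι]

lemma coordProj_add (A : Finset ι) (u v : EuclideanSpace ℝ ι) :
    coordProj A (u + v) = coordProj A u + coordProj A v := by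
  apply PiLp.ext; intro i
  simp only [coordProj_apply, PiLp.add_apply]
  split <;> simp

lemma coordProj_smul (A : Finset ι) (r : ℝ) (u : EuclideanSpace ℝ ι) :
    coordProj A (r • u) = r • coordProj A u := by
  apply PiLp.ext; intro i
  simp only [coordProj_apply, PiLp.smul_apply, smul_eq_mul]
  split <;> simp

lemma coordProj_idem (A : Finset ι) (u : EuclideanSpace ℝ ι) :
    coordProj A (coordProj A u) = coordProj A u := by
  apply PiLp.ext; intro i
  simp only [coordProj_apply]
  split <;> simp_all

lemma inner_coordProj (A : Finset ι) (u v : EuclideanSpace ℝ ι) :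
    (inner ℝ (coordProj A u) v : ℝ) = inner ℝ (coordProj A u) (coordProj A v) := by
  rw [esp_inner_eq, esp_inner_eq]
  apply Finset.sum_congr rfl
  intro i _
  simp only [coordProj_apply]
  split <;> simp

lemma coordProj_inner_symm (A : Finset ι) (u v : EuclideanSpace ℝ ι) :
    (inner ℝ (coordProj A u) v : ℝ) = inner ℝ u (coordProj A v) := by
  rw [esp_inner_eq, esp_inner_eq]
  apply Finset.sum_congr rfl
  intro i _
  simp only [coordProj_apply]
  split <;> simp

lemma memVl_iff_coordProj {ℓ : Fin k} {u : Esp n} :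
    memVl I J ℓ u ↔ coordProj (sumIdx I J ℓ) u = u := by
  constructor
  · intro h; apply PiLp.ext; intro i
    simp only [coordProj_apply]
    split
    · rfl
    · exact (h i (by assumption)).symm
  · intro h i hi
    rw [← h]
    simp only [coordProj_apply, if_neg hi]

lemma esp_sum_apply {m : ℕ} (f : Fin m → Esp n) (i : Fin n ⊕ Fin n) :
    (∑ ℓ, f ℓ) i = ∑ ℓ, f ℓ i := by
  induction (Finset.univ : Finset (Fin m)) using Finset.induction_on with
  | empty => simp only [Finset.sum_empty]; rfl
  | @insert _ _ h ih => rw [Finset.sum_insert h, Finset.sum_insert h, ← ih]; rfl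

end Proj

section Partn
variable {n k : ℕ} {ρ : Fin k → ℝ} {I J : Fin k → Finset (Fin n)}

lemma sum_coordProj (hadm : AdmissibleData ρ I J) (v : Esp n) :
    ∑ ℓ, coordProj (sumIdx I J ℓ) v = v := by
  apply esp_ext; intro i
  rw [esp_sum_apply]
  obtain ⟨ℓ₀, hℓ₀⟩ := sumIdx_cover hadm i
  rw [Finset.sum_eq_single ℓ₀]
  · rw [coordProj_apply, if_pos hℓ₀]
  · intro ℓ _ hne
    rw [coordProj_apply, if_neg (sumIdx_disjoint hadm hne.symm hℓ₀)]
  · intro h; exact absurd (Finset.mem_univ ℓ₀) h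

lemma coordProj_sum_eq (hadm : AdmissibleData ρ I J) (w : Fin k → Esp n)
    (hw : ∀ ℓ, memVl I J ℓ (w ℓ)) (ℓ : Fin k) :
    coordProj (sumIdx I J ℓ) (∑ m, w m) = w ℓ := by
  apply PiLp.ext; intro i
  rw [coordProj_apply]
  split
  · rename_i hi
    rw [esp_sum_apply, Finset.sum_eq_single ℓ]
    · intro m _ hne
      exact hw m i (sumIdx_disjoint hadm (Ne.symm hne) hi)
    · intro h; exact absurd (Finset.mem_univ ℓ) h
  · rename_i hi
    exact (hw ℓ i hi).symm

lemma mem_prodBalls_iff (hadm : AdmissibleData ρ I J) {v : Esp n} :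
    v ∈ prodBalls ρ I J ↔ ∀ ℓ, ‖coordProj (sumIdx I J ℓ) v‖ ≤ ρ ℓ := by
  constructor
  · rintro ⟨w, rfl, hw⟩ ℓ
    rw [coordProj_sum_eq hadm w (fun m => (hw m).1)]
    exact (hw ℓ).2
  · intro h
    refine ⟨fun ℓ => coordProj (sumIdx I J ℓ) v, (sum_coordProj hadm v).symm, fun ℓ =>
      ⟨fun i hi => by simp only [coordProj_apply, if_neg hi], h ℓ⟩⟩

lemma sum_inner_coordProj (hadm : AdmissibleData ρ I J) (v : Esp n) :
    ∑ ℓ, (inner ℝ (coordProj (sumIdx I J ℓ) v) (coordProj (sumIdx I J ℓ) v) : ℝ)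
      = inner ℝ v v := by
  have h1 : ∀ ℓ, (inner ℝ (coordProj (sumIdx I J ℓ) v) (coordProj (sumIdx I J ℓ) v) : ℝ)
      = inner ℝ (coordProj (sumIdx I J ℓ) v) v := fun ℓ => (inner_coordProj _ _ _).symm
  rw [Finset.sum_congr rfl (fun ℓ _ => h1 ℓ), ← sum_inner, sum_coordProj hadm]

lemma coordProj_eq_zero_of_ne (hadm : AdmissibleData ρ I J) {ℓ m : Fin k} (hne : ℓ ≠ m)
    {v : Esp n} (hv : memVl I J m v) : coordProj (sumIdx I J ℓ) v = 0 := by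
  apply PiLp.ext; intro i
  rw [coordProj_apply]
  split
  · rename_i hi
    exact hv i (sumIdx_disjoint hadm hne hi)
  · rfl

lemma exists_sphere_vec (hadm : AdmissibleData ρ I J) (ℓ : Fin k) :
    ∃ s : Esp n, memVl I J ℓ s ∧ ‖s‖ = ρ ℓ := by
  obtain ⟨i₀, hi₀⟩ := sumIdx_nonempty hadm ℓ
  refine ⟨EuclideanSpace.single i₀ (ρ ℓ), ?_, ?_⟩
  · intro i hi
    rw [EuclideanSpace.single_apply, if_neg]
    rintro rfl; exact hi hi₀
  · rw [EuclideanSpace.norm_single, Real.norm_eq_abs, abs_of_pos (hadm.1 ℓ)]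

lemma memVl_add {ℓ : Fin k} {u v : Esp n} (hu : memVl I J ℓ u) (hv : memVl I J ℓ v) :
    memVl I J ℓ (u + v) := by
  intro i hi
  have : (u + v) i = u i + v i := rfl
  rw [this, hu i hi, hv i hi, add_zero]

lemma memVl_smul {ℓ : Fin k} (r : ℝ) {u : Esp n} (hu : memVl I J ℓ u) :
    memVl I J ℓ (r • u) := by
  intro i hi
  have : (r • u) i = r * u i := rfl
  rw [this, hu i hi, mul_zero]

end Partn

section LemA
variable {n k : ℕ} {ρ : Fin k → ℝ} {I J : Fin k → Finset (Fin n)}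

lemma memVl_coordProj {ℓ : Fin k} (u : Esp n) :
    memVl I J ℓ (coordProj (sumIdx I J ℓ) u) := fun i hi => by
  rw [coordProj_apply, if_neg hi]

lemma memVl_zero {ℓ : Fin k} : memVl I J ℓ (0 : Esp n) := fun i _ => rfl

theorem lemA (hadm : AdmissibleData ρ I J) (g : Esp n ≃ₗᵢ[ℝ] Esp n)
    (hg : ∀ v ∈ prodBalls ρ I J, g v ∈ prodBalls ρ I J) (ℓ m : Fin k) :
    ∃ a : ℝ, (a = 0 ∨ a = 1) ∧
      ∀ v, memVl I J m v → coordProj (sumIdx I J ℓ) (g v) = a • (g v) := by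
  classical
  have hA : True := trivial
  -- the linear map T u = P_ℓ (g u)
  set T : Esp n →ₗ[ℝ] Esp n :=
    { toFun := fun u => coordProj (sumIdx I J ℓ) (g u)
      map_add' := fun u v => by
        show coordProj (sumIdx I J ℓ) (g (u + v)) = _
        rw [g.map_add, coordProj_add]
      map_smul' := fun r u => by
        show coordProj (sumIdx I J ℓ) (g (r • u)) = r • coordProj (sumIdx I J ℓ) (g u)
        rw [g.map_smul, coordProj_smul] } with hT
  have hTapp : ∀ u, T u = coordProj (sumIdx I J ℓ) (g u) := fun u => rfl
  set B : Esp n → Esp n → ℝ := fun u v => inner ℝ (T u) (T v) with hB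
  set q : Esp n → ℝ := fun u => B u u with hq
  -- preservation of the extreme set
  have hS : ∀ v : Esp n, (∀ j, ‖coordProj (sumIdx I J j) v‖ = ρ j) →
      ∀ j, ‖coordProj (sumIdx I J j) (g v)‖ = ρ j := by
    intro v hv
    have hvP : v ∈ prodBalls ρ I J :=
      (mem_prodBalls_iff hadm).2 (fun j => le_of_eq (hv j))
    have hle : ∀ j, ‖coordProj (sumIdx I J j) (g v)‖ ≤ ρ j :=
      (mem_prodBalls_iff hadm).1 (hg v hvP)
    have hsumN : ∑ j, ‖coordProj (sumIdx I J j) (g v)‖^2 = ∑ j, (ρ j)^2 := by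
      have h1 : ∑ j, ‖coordProj (sumIdx I J j) (g v)‖^2
          = ∑ j, (inner ℝ (coordProj (sumIdx I J j) (g v)) (coordProj (sumIdx I J j) (g v)) : ℝ) :=
        Finset.sum_congr rfl fun j _ => (real_inner_self_eq_norm_sq _).symm
      have h2 : (inner ℝ (g v) (g v) : ℝ) = inner ℝ v v := by
        rw [real_inner_self_eq_norm_sq, real_inner_self_eq_norm_sq, g.norm_map]
      have h3 : ∑ j, (inner ℝ (coordProj (sumIdx I J j) v) (coordProj (sumIdx I J j) v) : ℝ)
          = ∑ j, (ρ j)^2 :=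
        Finset.sum_congr rfl fun j _ => by rw [real_inner_self_eq_norm_sq, hv j]
      rw [h1, sum_inner_coordProj hadm, h2, ← sum_inner_coordProj hadm v, h3]
    have hzero : ∑ j, ((ρ j)^2 - ‖coordProj (sumIdx I J j) (g v)‖^2) = 0 := by
      rw [Finset.sum_sub_distrib, hsumN, sub_self]
    have hterm : ∀ j ∈ Finset.univ, (0:ℝ) ≤ (ρ j)^2 - ‖coordProj (sumIdx I J j) (g v)‖^2 := by
      intro j _
      have h1 : ‖coordProj (sumIdx I J j) (g v)‖ ≤ ρ j := hle j
      have h2 : (0:ℝ) ≤ ‖coordProj (sumIdx I J j) (g v)‖ := norm_nonneg _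
      nlinarith
    intro j
    have := (Finset.sum_eq_zero_iff_of_nonneg hterm).1 hzero j (Finset.mem_univ j)
    have h2 : (0:ℝ) ≤ ‖coordProj (sumIdx I J j) (g v)‖ := norm_nonneg _
    have h3 : (0:ℝ) < ρ j := hadm.1 j
    nlinarith
  -- main value of q on extreme points
  have hqval : ∀ v : Esp n, (∀ j, ‖coordProj (sumIdx I J j) v‖ = ρ j) → q v = (ρ ℓ)^2 := by
    intro v hv
    have := hS v hv ℓ
    simp only [hq, hB, hTapp]
    rw [real_inner_self_eq_norm_sq, this]
  -- sphere vectors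
  choose s hsV hsN using fun j => exists_sphere_vec hadm j
  -- expansion lemmas
  have hBadd₁ : ∀ x y z, B (x + y) z = B x z + B y z := by
    intro x y z; simp only [hB, map_add, inner_add_left]
  have hBadd₂ : ∀ x y z, B x (y + z) = B x y + B x z := by
    intro x y z; simp only [hB, map_add, inner_add_right]
  have hBsmul₁ : ∀ (r : ℝ) x y, B (r • x) y = r * B x y := by
    intro r x y; simp only [hB, T.map_smul, real_inner_smul_left]
  have hBsmul₂ : ∀ (r : ℝ) x y, B x (r • y) = r * B x y := by
    intro r x y; simp only [hB, T.map_smul, real_inner_smul_right]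
  have hBsymm : ∀ x y, B x y = B y x := by
    intro x y; simp only [hB]; exact real_inner_comm _ _
  have hqexp : ∀ x y z, q (x + y + z)
      = q x + q y + q z + 2 * B x y + 2 * B x z + 2 * B y z := by
    intro x y z
    simp only [hq, hBadd₁, hBadd₂]
    rw [hBsymm y x, hBsymm z x, hBsymm z y]
    ring
  -- family sums
  have hfamsum : ∀ (m₁ m₂ : Fin k) (_ : m₁ ≠ m₂) (x y : Esp n),
      (∑ j, (fun j => if j = m₁ then x else if j = m₂ then y else s j) j)
        = x + y + ∑ j, (if j = m₁ ∨ j = m₂ then (0 : Esp n) else s j) := by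
    intro m₁ m₂ hne x y
    have hpt : ∀ j, (if j = m₁ then x else if j = m₂ then y else s j)
        = (if j = m₁ then x else 0) + (if j = m₂ then y else 0)
          + (if j = m₁ ∨ j = m₂ then (0 : Esp n) else s j) := by
      intro j
      by_cases h1 : j = m₁
      · subst h1; simp [hne]
      · by_cases h2 : j = m₂
        · subst h2; simp [h1]
        · simp [h1, h2]
    rw [Finset.sum_congr rfl (fun j _ => hpt j), Finset.sum_add_distrib,
      Finset.sum_add_distrib, Finset.sum_ite_eq' Finset.univ m₁ (fun _ => x),
      Finset.sum_ite_eq' Finset.univ m₂ (fun _ => y)]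
    simp
  -- extreme property of family sums
  have hfamS : ∀ (m₁ m₂ : Fin k) (_ : m₁ ≠ m₂) (x y : Esp n),
      memVl I J m₁ x → ‖x‖ = ρ m₁ → memVl I J m₂ y → ‖y‖ = ρ m₂ →
      ∀ j, ‖coordProj (sumIdx I J j) (x + y + ∑ j, (if j = m₁ ∨ j = m₂ then (0 : Esp n) else s j))‖
        = ρ j := by
    intro m₁ m₂ hne x y hx hxn hy hyn j
    rw [← hfamsum m₁ m₂ hne x y,
      coordProj_sum_eq hadm _ (fun j => by
        by_cases h1 : j = m₁
        · subst h1; simpa using hx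
        · by_cases h2 : j = m₂
          · subst h2; simp only [if_neg h1, if_pos rfl]; exact hy
          · simp only [if_neg h1, if_neg h2]; exact hsV j)]
    by_cases h1 : j = m₁
    · subst h1; simpa using hxn
    · by_cases h2 : j = m₂
      · subst h2; simp only [if_neg h1, if_pos rfl]; exact hyn
      · simp only [if_neg h1, if_neg h2]; exact hsN j
  -- cross terms vanish, sphere case
  have hcross0 : ∀ (m₁ m₂ : Fin k) (_ : m₁ ≠ m₂) (x y : Esp n),
      memVl I J m₁ x → ‖x‖ = ρ m₁ → memVl I J m₂ y → ‖y‖ = ρ m₂ → B x y = 0 := by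
    intro m₁ m₂ hne x y hx hxn hy hyn
    set w : Esp n := ∑ j, (if j = m₁ ∨ j = m₂ then (0 : Esp n) else s j) with hw
    have hnx : memVl I J m₁ (-x) := by
      have := memVl_smul (I := I) (J := J) (-1 : ℝ) hx; simpa using this
    have hny : memVl I J m₂ (-y) := by
      have := memVl_smul (I := I) (J := J) (-1 : ℝ) hy; simpa using this
    have hnxn : ‖-x‖ = ρ m₁ := by rwa [norm_neg]
    have hnyn : ‖-y‖ = ρ m₂ := by rwa [norm_neg]
    have e1 := hqval _ (hfamS m₁ m₂ hne x y hx hxn hy hyn)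
    have e2 := hqval _ (hfamS m₁ m₂ hne (-x) y hnx hnxn hy hyn)
    have e3 := hqval _ (hfamS m₁ m₂ hne x (-y) hx hxn hny hnyn)
    have e4 := hqval _ (hfamS m₁ m₂ hne (-x) (-y) hnx hnxn hny hnyn)
    rw [hqexp] at e1 e2 e3 e4
    have hqneg : ∀ z : Esp n, q (-z) = q z := by
      intro z
      have : (-z : Esp n) = (-1 : ℝ) • z := by simp
      simp only [hq, this, hBsmul₁, hBsmul₂]; ring
    have hBneg₁ : ∀ x' y' : Esp n, B (-x') y' = - B x' y' := by
      intro x' y'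
      have : (-x' : Esp n) = (-1 : ℝ) • x' := by simp
      rw [this, hBsmul₁]; ring
    have hBneg₂ : ∀ x' y' : Esp n, B x' (-y') = - B x' y' := by
      intro x' y'
      have : (-y' : Esp n) = (-1 : ℝ) • y' := by simp
      rw [this, hBsmul₂]; ring
    simp only [hqneg, hBneg₁, hBneg₂, neg_neg] at e2 e3 e4
    linarith
  -- cross terms vanish, general
  have hcross : ∀ (m₁ m₂ : Fin k) (_ : m₁ ≠ m₂) (x y : Esp n),
      memVl I J m₁ x → memVl I J m₂ y → B x y = 0 := by
    intro m₁ m₂ hne x y hx hy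
    rcases eq_or_ne x 0 with rfl | hx0
    · simp only [hB, map_zero, inner_zero_left]
    rcases eq_or_ne y 0 with rfl | hy0
    · simp only [hB, map_zero, inner_zero_right]
    have hxn : (0:ℝ) < ‖x‖ := norm_pos_iff.2 hx0
    have hyn : (0:ℝ) < ‖y‖ := norm_pos_iff.2 hy0
    have hρ1 : (0:ℝ) < ρ m₁ := hadm.1 m₁
    have hρ2 : (0:ℝ) < ρ m₂ := hadm.1 m₂
    set x' : Esp n := (ρ m₁ / ‖x‖) • x with hx'
    set y' : Esp n := (ρ m₂ / ‖y‖) • y with hy'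
    have hx'm : memVl I J m₁ x' := memVl_smul _ hx
    have hy'm : memVl I J m₂ y' := memVl_smul _ hy
    have hx'n : ‖x'‖ = ρ m₁ := by
      rw [hx', norm_smul, Real.norm_eq_abs, abs_of_pos (by positivity),
        div_mul_cancel₀ _ (ne_of_gt hxn)]
    have hy'n : ‖y'‖ = ρ m₂ := by
      rw [hy', norm_smul, Real.norm_eq_abs, abs_of_pos (by positivity),
        div_mul_cancel₀ _ (ne_of_gt hyn)]
    have h0 := hcross0 m₁ m₂ hne x' y' hx'm hx'n hy'm hy'n
    rw [hx', hy', hBsmul₁, hBsmul₂] at h0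
    have hne1 : ρ m₁ / ‖x‖ ≠ 0 := by positivity
    have hne2 : ρ m₂ / ‖y‖ ≠ 0 := by positivity
    rcases mul_eq_zero.1 h0 with h | h
    · exact absurd h hne1
    rcases mul_eq_zero.1 h with h | h
    · exact absurd h hne2
    · exact h
  -- q is constant on the sphere of V_m
  set w' : Esp n := ∑ j, (if j = m then (0 : Esp n) else s j) with hw'
  have hw'mem : ∀ j, memVl I J j ((if j = m then (0 : Esp n) else s j)) := by
    intro j; by_cases h : j = m
    · subst h; simp only [if_pos rfl]; exact memVl_zero
    · simp only [if_neg h]; exact hsV j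
  have hBw' : ∀ x, memVl I J m x → B x w' = 0 := by
    intro x hx
    have : B x w' = ∑ j, B x (if j = m then (0 : Esp n) else s j) := by
      simp only [hB, hw']
      rw [_root_.map_sum T _ Finset.univ, inner_sum]
    rw [this]
    apply Finset.sum_eq_zero
    intro j _
    by_cases h : j = m
    · subst h; simp [hB]
    · simp only [if_neg h]
      exact hcross m j (fun hh => h hh.symm) x (s j) hx (hsV j)
  have hsphereS : ∀ x, memVl I J m x → ‖x‖ = ρ m → ∀ j, ‖coordProj (sumIdx I J j) (x + w')‖ = ρ j := by
    intro x hx hxn j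
    have hsum : x + w' = ∑ j', (fun j' => if j' = m then x else s j') j' := by
      have hpt : ∀ j', (if j' = m then x else s j')
          = (if j' = m then x else 0) + (if j' = m then (0:Esp n) else s j') := by
        intro j'; by_cases h : j' = m <;> simp [h]
      rw [Finset.sum_congr rfl (fun j' _ => hpt j'), Finset.sum_add_distrib,
        Finset.sum_ite_eq' Finset.univ m (fun _ => x), ← hw']
      simp
    rw [hsum, coordProj_sum_eq hadm _ (fun j' => by
      by_cases h : j' = m
      · subst h; simpa using hx
      · simp only [if_neg h]; exact hsV j')]
    by_cases h : j = m
    · subst h; simpa using hxn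
    · simp only [if_neg h]; exact hsN j
  have hqconst : ∀ x, memVl I J m x → ‖x‖ = ρ m → q x = (ρ ℓ)^2 - q w' := by
    intro x hx hxn
    have := hqval _ (hsphereS x hx hxn)
    have hexp : q (x + w') = q x + 2 * B x w' + q w' := by
      simp only [hq, hBadd₁, hBadd₂]
      rw [hBsymm w' x]; ring
    rw [hexp, hBw' x hx] at this
    linarith
  -- define a
  set a : ℝ := ((ρ ℓ)^2 - q w') / (ρ m)^2 with ha
  have hρm : (0:ℝ) < ρ m := hadm.1 m
  have hqhom : ∀ x, memVl I J m x → q x = a * ‖x‖^2 := by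
    intro x hx
    rcases eq_or_ne x 0 with rfl | hx0
    · simp only [hq, hB, map_zero, inner_zero_left, norm_zero]; ring
    · have hxn : (0:ℝ) < ‖x‖ := norm_pos_iff.2 hx0
      set x' : Esp n := (ρ m / ‖x‖) • x with hx'
      have hx'm : memVl I J m x' := memVl_smul _ hx
      have hx'n : ‖x'‖ = ρ m := by
        rw [hx', norm_smul, Real.norm_eq_abs, abs_of_pos (by positivity),
          div_mul_cancel₀ _ (ne_of_gt hxn)]
      have h1 := hqconst x' hx'm hx'n
      rw [hx'] at h1
      have h2 : q ((ρ m / ‖x‖) • x) = (ρ m / ‖x‖)^2 * q x := by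
        simp only [hq, hBsmul₁, hBsmul₂]; ring
      rw [h2] at h1
      have hc : (ρ m / ‖x‖)^2 ≠ 0 := by positivity
      rw [ha]
      field_simp at h1 ⊢
      nlinarith [h1]
  -- polarization on V_m
  have hBpol : ∀ x y, memVl I J m x → memVl I J m y → B x y = a * inner ℝ x y := by
    intro x y hx hy
    have h1 := hqhom (x + y) (memVl_add hx hy)
    have h2 := hqhom x hx
    have h3 := hqhom y hy
    have hexp : q (x + y) = q x + 2 * B x y + q y := by
      simp only [hq, hBadd₁, hBadd₂]; rw [hBsymm y x]; ring
    have hnorm : ‖x + y‖^2 = ‖x‖^2 + 2 * (inner ℝ x y : ℝ) + ‖y‖^2 := by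
      rw [← real_inner_self_eq_norm_sq, ← real_inner_self_eq_norm_sq,
        ← real_inner_self_eq_norm_sq, inner_add_add_self]
      rw [real_inner_comm y x]
      ring
    rw [hexp, h2, h3, hnorm] at h1
    linarith
  -- main eigen-equation
  have hkey : ∀ u v, memVl I J m v →
      (inner ℝ (g u) (coordProj (sumIdx I J ℓ) (g v)) : ℝ) = a * inner ℝ u v := by
    intro u v hv
    have h1 : (inner ℝ (g u) (coordProj (sumIdx I J ℓ) (g v)) : ℝ) = B u v := by
      rw [← coordProj_inner_symm, inner_coordProj]
      rfl
    have hdec : B u v = ∑ j, B (coordProj (sumIdx I J j) u) v := by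
      have : (∑ j, coordProj (sumIdx I J j) u) = u := sum_coordProj hadm u
      conv_lhs => rw [← this]
      simp only [hB]
      rw [_root_.map_sum T _ Finset.univ, sum_inner]
    have hterms : ∀ j ∈ Finset.univ, j ≠ m →
        B (coordProj (sumIdx I J j) u) v = 0 := by
      intro j _ hj
      exact hcross j m hj _ v (memVl_coordProj u) hv
    rw [h1, hdec, Finset.sum_eq_single m (fun j h hj => hterms j h hj) (fun h => absurd (Finset.mem_univ m) h)]
    rw [hBpol _ v (memVl_coordProj u) hv, coordProj_inner_symm,
      memVl_iff_coordProj.1 hv]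
  have heig : ∀ v, memVl I J m v → coordProj (sumIdx I J ℓ) (g v) = a • (g v) := by
    intro v hv
    set d : Esp n := coordProj (sumIdx I J ℓ) (g v) - a • (g v) with hd
    have hzero : ∀ x : Esp n, (inner ℝ x d : ℝ) = 0 := by
      intro x
      obtain ⟨u, rfl⟩ := g.surjective x
      rw [hd, inner_sub_right, hkey u v hv, real_inner_smul_right,
        g.inner_map_map, sub_self]
    have : d = 0 := by
      have := hzero d
      rwa [inner_self_eq_zero] at this
    rw [hd] at this
    have := sub_eq_zero.1 this
    exact this
  refine ⟨a, ?_, heig⟩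
  -- a ∈ {0, 1}
  have hsm := hsV m
  have hsmn := hsN m
  have h1 := heig (s m) hsm
  have h2 : coordProj (sumIdx I J ℓ) (coordProj (sumIdx I J ℓ) (g (s m)))
      = coordProj (sumIdx I J ℓ) (g (s m)) := coordProj_idem _ _
  rw [h1, coordProj_smul, h1, smul_smul] at h2
  have h3 : ((a * a - a) : ℝ) • (g (s m)) = 0 := by
    rw [sub_smul, h2, sub_self]
  have hgs : g (s m) ≠ 0 := by
    intro h
    have : ‖g (s m)‖ = 0 := by rw [h, norm_zero]
    rw [g.norm_map, hsmn] at this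
    exact absurd this (ne_of_gt (hadm.1 m))
  rcases smul_eq_zero.1 h3 with h | h
  · have : a * (a - 1) = 0 := by linear_combination h
    rcases mul_eq_zero.1 this with h' | h'
    · exact Or.inl h'
    · exact Or.inr (by linarith)
  · exact absurd h hgs

end LemA

section Circle
variable {n k : ℕ} {ρ : Fin k → ℝ} {I J : Fin k → Finset (Fin n)}

lemma esp_normsq {ι : Type*} [Fintype ι] (x : EuclideanSpace ℝ ι) :
    ‖x‖^2 = ∑ i, (x i)^2 := by
  rw [← real_inner_self_eq_norm_sq, esp_inner_eq]
  exact Finset.sum_congr rfl fun i _ => (sq (x i)).symm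

lemma torusLIE_apply (θ : Fin n → ℝ) (u : Esp n) : torusLIE θ u = torusAct θ u := rfl

lemma circle_invariant (hadm : AdmissibleData ρ I J)
    (hP : ∀ t : ℝ, ∀ v ∈ prodBalls ρ I J, torusAct (fun _ => t) v ∈ prodBalls ρ I J)
    (ℓ : Fin k) (t : ℝ) {v : Esp n} (hv : memVl I J ℓ v) :
    memVl I J ℓ (torusAct (fun _ => t) v) := by
  classical
  obtain ⟨s, hsV, hsN⟩ := exists_sphere_vec hadm ℓ
  have hρ : (0:ℝ) < ρ ℓ := hadm.1 ℓ
  set F : ℝ → ℝ := fun t => ∑ i, (coordProj (sumIdx I J ℓ) (torusAct (fun _ => t) s) i)^2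
    with hF
  have hFnorm : ∀ t, F t = ‖coordProj (sumIdx I J ℓ) (torusAct (fun _ => t) s)‖^2 :=
    fun t => (esp_normsq _).symm
  -- each t gives an eigenvalue aₜ ∈ {0,1}
  have hlem : ∀ t : ℝ, ∃ a : ℝ, (a = 0 ∨ a = 1) ∧
      ∀ u, memVl I J ℓ u → coordProj (sumIdx I J ℓ) (torusAct (fun _ => t) u)
        = a • (torusAct (fun _ => t) u) := by
    intro t
    obtain ⟨a, h01, hev⟩ := lemA hadm (torusLIE (fun _ => t))
      (fun u hu => hP t u hu) ℓ ℓ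
    exact ⟨a, h01, fun u hu => hev u hu⟩
  have hF01 : ∀ t : ℝ, F t = 0 ∨ F t = (ρ ℓ)^2 := by
    intro t
    obtain ⟨a, h01, hev⟩ := hlem t
    have h1 : F t = ‖a • (torusAct (fun _ => t) s)‖^2 := by rw [hFnorm, hev s hsV]
    rw [norm_smul, Real.norm_eq_abs, torusAct_norm, hsN, mul_pow, sq_abs] at h1
    rcases h01 with h | h
    · left; rw [h1, h]; ring
    · right; rw [h1, h]; ring
  have hF0 : F 0 = (ρ ℓ)^2 := by
    rw [hFnorm, show (fun _ : Fin n => (0:ℝ)) = (0 : Fin n → ℝ) from rfl,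
      torusAct_zero, memVl_iff_coordProj.1 hsV, hsN]
  have hFcont : Continuous F := by
    apply continuous_finset_sum
    intro i _
    apply Continuous.pow
    rcases i with j | j
    · by_cases h : (Sum.inl j) ∈ sumIdx I J ℓ
      · simp only [coordProj_apply, torusAct_apply_inl, if_pos h]
        exact (Real.continuous_cos.mul continuous_const).sub
          (Real.continuous_sin.mul continuous_const)
      · simp only [coordProj_apply, if_neg h]
        exact continuous_const
    · by_cases h : (Sum.inr j) ∈ sumIdx I J ℓ
      · simp only [coordProj_apply, torusAct_apply_inr, if_pos h]
        exact (Real.continuous_sin.mul continuous_const).add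
          (Real.continuous_cos.mul continuous_const)
      · simp only [coordProj_apply, if_neg h]
        exact continuous_const
  have hall : ∀ t : ℝ, F t = (ρ ℓ)^2 := by
    intro t₀
    rcases hF01 t₀ with h0 | h; swap
    · exact h
    exfalso
    have hmem : ((ρ ℓ)^2 / 2) ∈ Set.Icc (0:ℝ) ((ρ ℓ)^2) := by
      constructor <;> nlinarith
    rcases le_total 0 t₀ with ht | ht
    · have hsub := intermediate_value_Icc' ht hFcont.continuousOn
      have : ((ρ ℓ)^2/2) ∈ F '' Set.Icc 0 t₀ := hsub (by rw [h0, hF0]; exact hmem)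
      obtain ⟨c, -, hc⟩ := this
      rcases hF01 c with h' | h' <;> rw [hc] at h' <;> nlinarith
    · have hsub := intermediate_value_Icc ht hFcont.continuousOn
      have : ((ρ ℓ)^2/2) ∈ F '' Set.Icc t₀ 0 := hsub (by rw [h0, hF0]; exact hmem)
      obtain ⟨c, -, hc⟩ := this
      rcases hF01 c with h' | h' <;> rw [hc] at h' <;> nlinarith
  -- conclude a_t = 1
  obtain ⟨a, h01, hev⟩ := hlem t
  have ha1 : a = 1 := by
    rcases h01 with h | h; swap
    · exact h
    exfalso
    have h1 : F t = ‖a • (torusAct (fun _ => t) s)‖^2 := by rw [hFnorm, hev s hsV]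
    rw [h, hall t] at h1
    simp only [zero_smul, norm_zero] at h1
    nlinarith
  have := hev v hv
  rw [ha1, one_smul] at this
  exact memVl_iff_coordProj.2 this
end Circle

section Unitary
variable {n : ℕ}

def zvec (u : Esp n) : Fin n → ℂ := fun m => Complex.mk (u (Sum.inl m)) (u (Sum.inr m))

lemma unitaryAct_apply_inl (Q : Matrix (Fin n) (Fin n) ℂ) (u : Esp n) (j : Fin n) :
    unitaryAct Q u (Sum.inl j) = (Q.mulVec (zvec u) j).re := rfl

lemma unitaryAct_apply_inr (Q : Matrix (Fin n) (Fin n) ℂ) (u : Esp n) (j : Fin n) :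
    unitaryAct Q u (Sum.inr j) = (Q.mulVec (zvec u) j).im := rfl

lemma zvec_unitaryAct (Q : Matrix (Fin n) (Fin n) ℂ) (u : Esp n) :
    zvec (unitaryAct Q u) = Q.mulVec (zvec u) := by
  funext m
  apply Complex.ext
  · rfl
  · rfl

lemma unitaryAct_mul (A B : Matrix (Fin n) (Fin n) ℂ) (u : Esp n) :
    unitaryAct A (unitaryAct B u) = unitaryAct (A * B) u := by
  apply esp_ext
  have h : A.mulVec (zvec (unitaryAct B u)) = (A * B).mulVec (zvec u) := by
    rw [zvec_unitaryAct, Matrix.mulVec_mulVec]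
  rintro (j | j)
  · rw [unitaryAct_apply_inl, unitaryAct_apply_inl, h]
  · rw [unitaryAct_apply_inr, unitaryAct_apply_inr, h]

lemma unitaryAct_one (u : Esp n) : unitaryAct (1 : Matrix (Fin n) (Fin n) ℂ) u = u := by
  apply esp_ext
  rintro (j | j)
  · rw [unitaryAct_apply_inl, Matrix.one_mulVec]; rfl
  · rw [unitaryAct_apply_inr, Matrix.one_mulVec]; rfl

lemma unitaryAct_leftinv {Q : Matrix (Fin n) (Fin n) ℂ} (hQ : Q ∈ Matrix.unitaryGroup (Fin n) ℂ)
    (u : Esp n) : unitaryAct (star Q) (unitaryAct Q u) = u := by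
  rw [unitaryAct_mul, (Unitary.mem_iff.1 hQ).1, unitaryAct_one]

lemma unitaryAct_inj {Q : Matrix (Fin n) (Fin n) ℂ} (hQ : Q ∈ Matrix.unitaryGroup (Fin n) ℂ) :
    Function.Injective (unitaryAct Q) := by
  intro u v h
  have h2 := congrArg (unitaryAct (star Q)) h
  rwa [unitaryAct_leftinv hQ, unitaryAct_leftinv hQ] at h2

lemma torusAct_const_eq (t : ℝ) (u : Esp n) :
    torusAct (fun _ => t) u
      = unitaryAct ((Complex.mk (Real.cos t) (Real.sin t)) • (1 : Matrix (Fin n) (Fin n) ℂ)) u := by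
  have h : ∀ m, ((Complex.mk (Real.cos t) (Real.sin t)) • (1 : Matrix (Fin n) (Fin n) ℂ)).mulVec
      (zvec u) m = (Complex.mk (Real.cos t) (Real.sin t)) * zvec u m := by
    intro m
    rw [Matrix.smul_mulVec, Matrix.one_mulVec]
    rfl
  apply esp_ext
  rintro (j | j)
  · rw [torusAct_apply_inl, unitaryAct_apply_inl, h j, Complex.mul_re]
    rfl
  · rw [torusAct_apply_inr, unitaryAct_apply_inr, h j, Complex.mul_im]
    have : (Complex.mk (Real.cos t) (Real.sin t)).re * (zvec u j).im
        + (Complex.mk (Real.cos t) (Real.sin t)).im * (zvec u j).re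
        = Real.sin t * u (Sum.inl j) + Real.cos t * u (Sum.inr j) := by
      show Real.cos t * u (Sum.inr j) + Real.sin t * u (Sum.inl j) = _
      ring
    rw [this]

lemma circle_comm (Q : Matrix (Fin n) (Fin n) ℂ) (t : ℝ) (u : Esp n) :
    torusAct (fun _ => t) (unitaryAct Q u) = unitaryAct Q (torusAct (fun _ => t) u) := by
  rw [torusAct_const_eq, torusAct_const_eq, unitaryAct_mul, unitaryAct_mul,
    Matrix.smul_mul, Matrix.mul_smul, one_mul, mul_one]

end Unitary

section Final
variable {n k : ℕ} {ρ : Fin k → ℝ} {I J : Fin k → Finset (Fin n)}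

lemma coordProj_torusAct_comm {ℓ : Fin k} (hIJ : I ℓ = J ℓ) (θ : Fin n → ℝ) (v : Esp n) :
    coordProj (sumIdx I J ℓ) (torusAct θ v) = torusAct θ (coordProj (sumIdx I J ℓ) v) := by
  have hiff : ∀ j : Fin n, (Sum.inl j ∈ sumIdx I J ℓ ↔ Sum.inr j ∈ sumIdx I J ℓ) := by
    intro j; rw [mem_sumIdx_inl, mem_sumIdx_inr, hIJ]
  apply esp_ext
  rintro (j | j)
  · simp only [coordProj_apply, torusAct_apply_inl]
    by_cases h : Sum.inl j ∈ sumIdx I J ℓ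
    · rw [if_pos h, if_pos h, if_pos ((hiff j).1 h)]
    · rw [if_neg h, if_neg h, if_neg (fun hr => h ((hiff j).2 hr))]; ring
  · simp only [coordProj_apply, torusAct_apply_inr]
    by_cases h : Sum.inr j ∈ sumIdx I J ℓ
    · rw [if_pos h, if_pos ((hiff j).2 h), if_pos h]
    · rw [if_neg h, if_neg (fun hr => h ((hiff j).1 hr)), if_neg h]; ring

lemma toric_of_IJ (hadm : AdmissibleData ρ I J) (hIJ : ∀ ℓ, I ℓ = J ℓ) :
    IsToric (prodBalls ρ I J) := by
  have hmaps : ∀ (θ : Fin n → ℝ), ∀ v ∈ prodBalls ρ I J, torusAct θ v ∈ prodBalls ρ I J := by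
    intro θ v hv
    rw [mem_prodBalls_iff hadm] at hv ⊢
    intro ℓ
    rw [coordProj_torusAct_comm (hIJ ℓ), torusAct_norm]
    exact hv ℓ
  intro θ
  apply Set.Subset.antisymm
  · rintro x ⟨v, hv, rfl⟩
    exact hmaps θ v hv
  · intro v hv
    refine ⟨torusAct (-θ) v, hmaps (-θ) v hv, ?_⟩
    rw [torusAct_comp, add_neg_cancel, torusAct_zero]

lemma stdSymplForm_single_inl (i : Fin n) (v : Esp n) :
    stdSymplForm (EuclideanSpace.single (Sum.inl i) (1:ℝ)) v = v (Sum.inr i) := by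
  unfold stdSymplForm
  rw [Finset.sum_eq_single i]
  · rw [EuclideanSpace.single_apply, EuclideanSpace.single_apply, if_pos rfl,
      if_neg (by simp)]
    ring
  · intro j _ hj
    rw [EuclideanSpace.single_apply, EuclideanSpace.single_apply,
      if_neg (by simp [hj]), if_neg (by simp)]
    ring
  · intro h; exact absurd (Finset.mem_univ i) h

lemma stdSymplForm_single_inr (i : Fin n) (v : Esp n) :
    stdSymplForm (EuclideanSpace.single (Sum.inr i) (1:ℝ)) v = - v (Sum.inl i) := by
  unfold stdSymplForm
  rw [Finset.sum_eq_single i]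
  · rw [EuclideanSpace.single_apply, EuclideanSpace.single_apply, if_pos rfl,
      if_neg (by simp)]
    ring
  · intro j _ hj
    rw [EuclideanSpace.single_apply, EuclideanSpace.single_apply,
      if_neg (by simp [hj]), if_neg (by simp [hj])]
    ring
  · intro h; exact absurd (Finset.mem_univ i) h

lemma memVl_single {ℓ : Fin k} {i : Fin n ⊕ Fin n} (hi : i ∈ sumIdx I J ℓ) :
    memVl I J ℓ (EuclideanSpace.single i (1:ℝ)) := by
  intro i' hi'
  rw [EuclideanSpace.single_apply, if_neg]
  rintro rfl; exact hi' hi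

lemma IJ_of_symplectic {ℓ : Fin k} (h : VlSymplectic I J ℓ) : I ℓ = J ℓ := by
  apply Finset.ext
  intro i
  constructor
  · intro hiI
    by_contra hiJ
    have hu : memVl I J ℓ (EuclideanSpace.single (Sum.inl i) (1:ℝ)) :=
      memVl_single (mem_sumIdx_inl.2 hiI)
    have hz : ∀ v, memVl I J ℓ v →
        stdSymplForm (EuclideanSpace.single (Sum.inl i) (1:ℝ)) v = 0 := by
      intro v hv
      rw [stdSymplForm_single_inl]
      exact hv _ (fun hr => hiJ (mem_sumIdx_inr.1 hr))
    have := h _ hu hz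
    have h1 := congrArg (fun x : Esp n => x (Sum.inl i)) this
    rw [EuclideanSpace.single_apply, if_pos rfl] at h1
    exact one_ne_zero h1
  · intro hiJ
    by_contra hiI
    have hu : memVl I J ℓ (EuclideanSpace.single (Sum.inr i) (1:ℝ)) :=
      memVl_single (mem_sumIdx_inr.2 hiJ)
    have hz : ∀ v, memVl I J ℓ v →
        stdSymplForm (EuclideanSpace.single (Sum.inr i) (1:ℝ)) v = 0 := by
      intro v hv
      rw [stdSymplForm_single_inr]
      rw [hv _ (fun hr => hiI (mem_sumIdx_inl.1 hr))]
      ring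
    have := h _ hu hz
    have h1 := congrArg (fun x : Esp n => x (Sum.inr i)) this
    rw [EuclideanSpace.single_apply, if_pos rfl] at h1
    exact one_ne_zero h1

lemma symplectic_of_IJ {ℓ : Fin k} (hIJ : I ℓ = J ℓ) : VlSymplectic I J ℓ := by
  intro u hu hz
  apply PiLp.ext
  rintro (j | j)
  · by_cases h : Sum.inl j ∈ sumIdx I J ℓ
    · have hj : j ∈ J ℓ := by rwa [← hIJ, ← mem_sumIdx_inl]
      have hv : memVl I J ℓ (EuclideanSpace.single (Sum.inr j) (1:ℝ)) :=
        memVl_single (mem_sumIdx_inr.2 hj)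
      have := hz _ hv
      have hsymm : stdSymplForm u (EuclideanSpace.single (Sum.inr j) (1:ℝ)) = u (Sum.inl j) := by
        unfold stdSymplForm
        rw [Finset.sum_eq_single j]
        · rw [EuclideanSpace.single_apply, EuclideanSpace.single_apply, if_pos rfl,
            if_neg (by simp)]
          ring
        · intro j' _ hj'
          rw [EuclideanSpace.single_apply, EuclideanSpace.single_apply,
            if_neg (by simp [hj']), if_neg (by simp)]
          ring
        · intro h'; exact absurd (Finset.mem_univ j) h'
      rw [hsymm] at this
      exact this
    · exact hu _ h
  · by_cases h : Sum.inr j ∈ sumIdx I J ℓ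
    · have hj : j ∈ I ℓ := by rwa [hIJ, ← mem_sumIdx_inr]
      have hv : memVl I J ℓ (EuclideanSpace.single (Sum.inl j) (1:ℝ)) :=
        memVl_single (mem_sumIdx_inl.2 hj)
      have := hz _ hv
      have hsymm : stdSymplForm u (EuclideanSpace.single (Sum.inl j) (1:ℝ))
          = - u (Sum.inr j) := by
        unfold stdSymplForm
        rw [Finset.sum_eq_single j]
        · rw [EuclideanSpace.single_apply, EuclideanSpace.single_apply, if_pos rfl,
            if_neg (by simp)]
          ring
        · intro j' _ hj'
          rw [EuclideanSpace.single_apply, EuclideanSpace.single_apply,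
            if_neg (by simp [hj']), if_neg (by simp [hj'])]
          ring
        · intro h'; exact absurd (Finset.mem_univ j) h'
      rw [hsymm] at this
      have h0 : u (Sum.inr j) = 0 := by linarith
      exact h0
    · exact hu _ h

lemma IJ_of_toric (hadm : AdmissibleData ρ I J) {Q : Matrix (Fin n) (Fin n) ℂ}
    (hQ : Q ∈ Matrix.unitaryGroup (Fin n) ℂ)
    (htoric : IsToric (unitaryAct Q '' prodBalls ρ I J)) (ℓ : Fin k) : I ℓ = J ℓ := by
  -- the product of balls is invariant under the diagonal circle action
  have hP : ∀ t : ℝ, ∀ v ∈ prodBalls ρ I J, torusAct (fun _ => t) v ∈ prodBalls ρ I J := by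
    intro t v hv
    have h1 : torusAct (fun _ => t) (unitaryAct Q v) ∈ unitaryAct Q '' prodBalls ρ I J := by
      rw [← htoric (fun _ => t)]
      exact Set.mem_image_of_mem _ (Set.mem_image_of_mem _ hv)
    rw [circle_comm] at h1
    obtain ⟨w, hw, hweq⟩ := h1
    have := unitaryAct_inj hQ hweq
    rwa [← this]
  -- hence each V_ℓ is invariant under multiplication by i (angle π/2)
  have hinv : ∀ v : Esp n, memVl I J ℓ v →
      memVl I J ℓ (torusAct (fun _ => Real.pi/2) v) :=
    fun v hv => circle_invariant hadm hP ℓ (Real.pi/2) hv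
  apply Finset.ext
  intro i
  constructor
  · intro hiI
    by_contra hiJ
    have hu : memVl I J ℓ (EuclideanSpace.single (Sum.inl i) (1:ℝ)) :=
      memVl_single (mem_sumIdx_inl.2 hiI)
    have h2 := hinv _ hu (Sum.inr i) (fun hr => hiJ (mem_sumIdx_inr.1 hr))
    rw [torusAct_apply_inr, Real.cos_pi_div_two, Real.sin_pi_div_two,
      EuclideanSpace.single_apply, EuclideanSpace.single_apply, if_pos rfl,
      if_neg (by simp)] at h2
    simp at h2
  · intro hiJ
    by_contra hiI
    have hu : memVl I J ℓ (EuclideanSpace.single (Sum.inr i) (1:ℝ)) :=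
      memVl_single (mem_sumIdx_inr.2 hiJ)
    have h2 := hinv _ hu (Sum.inl i) (fun hr => hiI (mem_sumIdx_inl.1 hr))
    rw [torusAct_apply_inl, Real.cos_pi_div_two, Real.sin_pi_div_two,
      EuclideanSpace.single_apply, EuclideanSpace.single_apply, if_pos rfl,
      if_neg (by simp)] at h2
    simp at h2

end Final


/-- `Q·𝒫(ρ̄,I,J)` is toric for some `Q ∈ U(n)` iff every `V_ℓ` is a
symplectic subspace of `ℝ^{2n}`, which holds iff `I_ℓ = J_ℓ` for every `ℓ`. -/
theorem stmt_9 {n k : ℕ} (ρ : Fin k → ℝ) (I J : Fin k → Finset (Fin n))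
    (hadm : AdmissibleData ρ I J) :
    ((∃ Q ∈ Matrix.unitaryGroup (Fin n) ℂ, IsToric (unitaryAct Q '' prodBalls ρ I J)) ↔
        ∀ ℓ, VlSymplectic I J ℓ) ∧
    ((∀ ℓ, VlSymplectic I J ℓ) ↔ ∀ ℓ, I ℓ = J ℓ) := by
  constructor
  · constructor
    · rintro ⟨Q, hQ, htoric⟩ ℓ
      exact symplectic_of_IJ (IJ_of_toric hadm hQ htoric ℓ)
    · intro hsymp
      refine ⟨1, one_mem _, ?_⟩
      have himg : unitaryAct (1 : Matrix (Fin n) (Fin n) ℂ) '' prodBalls ρ I J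
          = prodBalls ρ I J := by
        rw [show unitaryAct (1 : Matrix (Fin n) (Fin n) ℂ) = id from funext unitaryAct_one,
          Set.image_id]
      rw [himg]
      exact toric_of_IJ hadm (fun ℓ => IJ_of_symplectic (hsymp ℓ))
  · exact ⟨fun hsymp ℓ => IJ_of_symplectic (hsymp ℓ),
      fun hIJ ℓ => symplectic_of_IJ (hIJ ℓ)⟩

end
end
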